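/- If Z ∈ 𝕊₊^{3N} has rank 3 and every diagonal 3 × 3 block Z_ii equals I₃, then there exists Y = [Y₁, ..., Y_N] ∈ ℝ^{3×3N} with each Yᵢ ∈ O(3) such that Z = YᵀY. -/

import Mathlib

open Matrix

/-- The `(i,j)` 3×3 block of a 3N×3N matrix. -/
def blk {N : ℕ} (M : Matrix (Fin N × Fin 3) (Fin N × Fin 3) ℝ) (i j : Fin N) :
    Matrix (Fin 3) (Fin 3) ℝ :=
  fun a b => M (i, a) (j, b)

/-- The `i`-th 3×3 block of a 3×3N matrix. -/
def colBlk {N : ℕ} (R : Matrix (Fin 3) (Fin N × Fin 3) ℝ) (i : Fin N) :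
    Matrix (Fin 3) (Fin 3) ℝ :=
  fun a b => R a (i, b)

/-- A real PSD matrix of rank 3 factors as `Yᵀ * Y` with `Y` having 3 rows. -/
lemma psd_rank_three_factor {n : Type*} [Fintype n] [DecidableEq n]
    (Z : Matrix n n ℝ) (hZ : Z.PosSemidef) (hrank : Z.rank = 3) :
    ∃ Y : Matrix (Fin 3) n ℝ, Z = Yᵀ * Y := by
  classical
  have hA := hZ.isHermitian
  set d := hA.eigenvalues with hd
  have hcard : Fintype.card {i // d i ≠ 0} = 3 := by
    rw [← hA.rank_eq_card_non_zero_eigs, hrank]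
  let e : {i // d i ≠ 0} ≃ Fin 3 := Fintype.equivFinOfCardEq hcard
  set U : Matrix n n ℝ := (hA.eigenvectorUnitary : Matrix n n ℝ) with hU
  refine ⟨fun k j => Real.sqrt (d (e.symm k).1) * U j (e.symm k).1, ?_⟩
  have hspec := hA.spectral_theorem
  rw [Unitary.conjStarAlgAut_apply] at hspec
  ext i j
  have hZij : Z i j = ∑ s : n, d s * (U i s * U j s) := by
    conv_lhs => rw [hspec]
    simp only [mul_apply, diagonal_apply, Function.comp_apply, RCLike.ofReal_real_eq_id,
      id_eq, star_apply, star_trivial, mul_ite, mul_zero, ite_mul, zero_mul,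
      Finset.sum_ite_eq, Finset.sum_ite_eq', Finset.mem_univ, if_true]
    exact Finset.sum_congr rfl fun s _ => by ring
  rw [hZij]
  change _ = ∑ k : Fin 3, (Real.sqrt (d (e.symm k).1) * U i (e.symm k).1) *
    (Real.sqrt (d (e.symm k).1) * U j (e.symm k).1)
  have hterm : ∀ k : Fin 3,
      (Real.sqrt (d (e.symm k).1) * U i (e.symm k).1) *
      (Real.sqrt (d (e.symm k).1) * U j (e.symm k).1)
      = d (e.symm k).1 * (U i (e.symm k).1 * U j (e.symm k).1) := by
    intro k
    have := Real.mul_self_sqrt (hZ.eigenvalues_nonneg (e.symm k).1)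
    ring_nf
    rw [Real.sq_sqrt (hZ.eigenvalues_nonneg (e.symm k).1)]
    ring
  rw [Finset.sum_congr rfl fun k _ => hterm k]
  rw [Equiv.sum_comp e.symm (fun s : {i // d i ≠ 0} => d s.1 * (U i s.1 * U j s.1))]
  rw [← Finset.sum_subtype (Finset.univ.filter fun s => d s ≠ 0)
    (fun s => by simp) (fun s => d s * (U i s * U j s))]
  rw [Finset.sum_filter_of_ne]
  intro s _ hne hds
  exact hne (by rw [hds]; ring)

theorem rank_three_psd_factors_through_O3 {N : ℕ}
    (Z : Matrix (Fin N × Fin 3) (Fin N × Fin 3) ℝ)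
    (hZ : Z.PosSemidef) (hrank : Z.rank = 3)
    (hdiag : ∀ i : Fin N, blk Z i i = 1) :
    ∃ Y : Matrix (Fin 3) (Fin N × Fin 3) ℝ,
      (∀ i : Fin N, (colBlk Y i)ᵀ * colBlk Y i = 1) ∧ Z = Yᵀ * Y := by
  obtain ⟨Y, hY⟩ := psd_rank_three_factor Z hZ hrank
  refine ⟨Y, fun i => ?_, hY⟩
  have h := hdiag i
  ext a b
  have : blk Z i i a b = ((colBlk Y i)ᵀ * colBlk Y i) a b := by
    rw [hY]
    simp [blk, colBlk, mul_apply]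
  rw [← this, h]
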